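/- arXiv:2403.15359 — 2 statements merged into one kernel-verified Lean document; each statement's English description precedes it below -/
import Mathlib

section
/- Let $X=(X_1,\dots,X_n)$ be a vector of independent random variables taking values in a measurable space, and let $X'$ be an independent copy of $X$. For a subset $A\subseteq[n]$ let $X^A$ denote the vector whose $i$-th coordinate is $X_i'$ if $i\in A$ and $X_i$ otherwise. For bounded measurable $f,h:\mathcal X^n\to\mathbb C$ and $j\in[n]$ set $\Delta_j f(X)=f(X)-f(X^{\{j\}})$. Then $\mathrm{Cov}(h(X),f(X)) = \tfrac12\sum_{A\subsetneq[n]} \frac{1}{\binom{n}{|A|}(n-|A|)} \sum_{j\notin A} \mathbb E\{\Delta_j h(X)\,\Delta_j f(X^A)\}$, where the sum over $A$ includes the empty set. -/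
/-!
Realise `(X, X')` on the canonical space `ι ⊕ ι → 𝒳` with the product law
`Measure.pi (Sum.elim ν ν)`, on which `X^A` is `resample A`, and put `J A = 𝔼[h(X) f(X^A)]`.
Since `X^univ = X'` is an independent copy of `X`, the covariance is `J ∅ - J univ`.
Exchanging the two copies of coordinate `j` preserves the law and swaps `X ↔ X^{j}` and
`X^A ↔ X^{A ∪ {j}}` for `j ∉ A`; hence `𝔼[Δ_j h(X) Δ_j f(X^A)] = 2 (J A - J (A ∪ {j}))`.
The weights are the Shapley weights, and the weighted sum of these increments telescopes to
`J ∅ - J univ`: this is the efficiency of the Shapley value.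
-/

open MeasureTheory ProbabilityTheory Finset

section Shapley

/-- `m! (n - m - 1)! / n!` for `m < n`; it vanishes at `m = n`, where `n - m = 0`. -/
def shapleyWeight (𝕜 : Type*) [Field 𝕜] (n m : ℕ) : 𝕜 :=
  1 / ((n.choose m : 𝕜) * ((n - m : ℕ) : 𝕜))

variable {α 𝕜 : Type*} [Fintype α] [DecidableEq α]

theorem sum_sum_compl_insert {M : Type*} [AddCommMonoid M] (φ : Finset α → Finset α → M) :
    ∑ A, ∑ j ∈ Aᶜ, φ A (insert j A) = ∑ B, ∑ j ∈ B, φ (B.erase j) B := by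
  rw [sum_sigma', sum_sigma']
  refine sum_nbij' (fun p => ⟨insert p.2 p.1, p.2⟩) (fun p => ⟨p.1.erase p.2, p.2⟩)
    ?_ ?_ ?_ ?_ ?_ <;> rintro ⟨A, j⟩ hj <;> simp_all

theorem shapleyWeight_mul_sub_sub_mul_pred [Field 𝕜] [CharZero 𝕜] {n m : ℕ} (hm : m ≤ n) :
    shapleyWeight 𝕜 n m * ((n - m : ℕ) : 𝕜) - m * shapleyWeight 𝕜 n (m - 1)
      = (if m = 0 then 1 else 0) - if m = n then 1 else 0 := by
  unfold shapleyWeight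
  rcases m with _ | k
  · rcases n.eq_zero_or_pos with rfl | hn
    · simp
    · simp [hn.ne, Nat.cast_ne_zero.2 hn.ne']
  have hC : (n.choose k : 𝕜) ≠ 0 := Nat.cast_ne_zero.2 (Nat.choose_pos (by omega)).ne'
  have hnk : ((n - k : ℕ) : 𝕜) ≠ 0 := Nat.cast_ne_zero.2 (by omega)
  have pascal : (n.choose (k + 1) : 𝕜) * (k + 1) = n.choose k * ((n - k : ℕ) : 𝕜) := by
    exact_mod_cast Nat.choose_succ_right_eq n k
  simp only [Nat.add_sub_cancel, Nat.succ_ne_zero, if_false, zero_sub, Nat.cast_succ]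
  rcases hm.lt_or_eq with hlt | rfl
  · have hC' : (n.choose (k + 1) : 𝕜) ≠ 0 := Nat.cast_ne_zero.2 (Nat.choose_pos hlt.le).ne'
    have hnk' : ((n - (k + 1) : ℕ) : 𝕜) ≠ 0 := Nat.cast_ne_zero.2 (by omega)
    rw [if_neg hlt.ne]
    field_simp
    linear_combination -pascal
  · field_simp
    simp

/-- Efficiency of the Shapley value, for the game `-I`. -/
theorem sum_shapleyWeight_mul_sum_compl_sub_insert [Field 𝕜] [CharZero 𝕜] (I : Finset α → 𝕜) :
    ∑ A ∈ (univ : Finset α).powerset.filter (· ≠ univ),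
        shapleyWeight 𝕜 (Fintype.card α) #A * ∑ j ∈ Aᶜ, (I A - I (insert j A))
      = I ∅ - I univ := by
  set n := Fintype.card α
  set w := shapleyWeight 𝕜 n
  calc _ = ∑ A, w #A * ∑ j ∈ Aᶜ, (I A - I (insert j A)) := by
        rw [powerset_univ]
        refine sum_filter_of_ne fun A _ hA hAuniv => hA ?_
        simp [hAuniv]
    _ = ∑ A, w #A * (n - #A : ℕ) * I A - ∑ B, ∑ j ∈ B, w #(B.erase j) * I B := by
        rw [← sum_sum_compl_insert (fun A B => w #A * I B), ← sum_sub_distrib]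
        refine sum_congr rfl fun A _ => ?_
        rw [sum_sub_distrib, sum_const, card_compl, mul_sub, mul_sum, nsmul_eq_mul]
        ring
    _ = ∑ A, (w #A * (n - #A : ℕ) - #A * w (#A - 1)) * I A := by
        rw [← sum_sub_distrib]
        refine sum_congr rfl fun B _ => ?_
        rw [sum_congr rfl fun j hj => by rw [card_erase_of_mem hj], sum_const, nsmul_eq_mul]
        ring
    _ = ∑ A, ((if A = ∅ then 1 else 0) - if A = univ then 1 else 0) * I A := by
        refine sum_congr rfl fun A _ => ?_
        rw [shapleyWeight_mul_sub_sub_mul_pred (card_le_univ A)]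
        simp_rw [card_eq_zero, card_eq_iff_eq_univ]
    _ = I ∅ - I univ := by simp [sub_mul, sum_sub_distrib]

end Shapley

section Resampling

variable {ι 𝒳 : Type*} [DecidableEq ι]

/-- The paper's `X^A`, with `x (.inl i)` playing `X_i` and `x (.inr i)` playing `X'_i`. -/
def resample (A : Finset ι) (x : ι ⊕ ι → 𝒳) : ι → 𝒳 :=
  A.piecewise (fun i => x (.inr i)) (fun i => x (.inl i))

@[simp]
lemma resample_empty (x : ι ⊕ ι → 𝒳) : resample ∅ x = fun i => x (.inl i) :=
  piecewise_empty _ _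

@[simp]
lemma resample_univ [Fintype ι] (x : ι ⊕ ι → 𝒳) : resample univ x = fun i => x (.inr i) :=
  piecewise_univ _ _

@[simp]
lemma resample_singleton (j : ι) (x : ι ⊕ ι → 𝒳) :
    resample {j} x = fun i => if i = j then x (.inr i) else x (.inl i) := by
  funext i
  simp [resample, piecewise]

@[fun_prop]
lemma measurable_resample [MeasurableSpace 𝒳] (A : Finset ι) :
    Measurable (resample (𝒳 := 𝒳) A) :=
  measurable_pi_lambda _ fun i => by
    by_cases hi : i ∈ A <;> simpa [resample, hi] using measurable_pi_apply _

def swapCopies (j : ι) : ι ⊕ ι ≃ ι ⊕ ι :=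
  Equiv.swap (.inl j) (.inr j)

lemma sumElim_swapCopies {β : Type*} (g : ι → β) (j : ι) (k : ι ⊕ ι) :
    Sum.elim g g (swapCopies j k) = Sum.elim g g k := by
  rcases k with i | i <;> by_cases hij : i = j <;>
    simp [swapCopies, hij, Equiv.swap_apply_of_ne_of_ne]

lemma resample_comp_swapCopies {A : Finset ι} {j : ι} (hj : j ∉ A) (x : ι ⊕ ι → 𝒳) :
    resample A (x ∘ swapCopies j) = resample (insert j A) x := by
  funext i
  by_cases hij : i = j
  · subst hij
    simp [resample, swapCopies, hj]
  · simp [resample, swapCopies, piecewise, hij, Equiv.swap_apply_of_ne_of_ne]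

end Resampling

theorem MeasureTheory.MeasurePreserving.integral_sub_mul_sub_of_involutive
    {α 𝕜 : Type*} [MeasurableSpace α] [RCLike 𝕜] {μ : Measure α} {T : α ≃ᵐ α}
    (hT : MeasurePreserving T μ μ) (hTT : Function.Involutive T) {a b c d : α → 𝕜}
    (hab : ∀ x, a (T x) = b x) (hcd : ∀ x, c (T x) = d x)
    (hac : Integrable (fun x => a x * c x) μ) (had : Integrable (fun x => a x * d x) μ) :
    ∫ x, (a x - b x) * (c x - d x) ∂μ = 2 * (∫ x, a x * c x ∂μ - ∫ x, a x * d x ∂μ) := by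
  set g : α → 𝕜 := fun x => a x * c x - a x * d x
  have hg : Integrable g μ := hac.sub had
  have hgT : Integrable (fun x => g (T x)) μ :=
    (hT.integrable_comp_emb T.measurableEmbedding).2 hg
  have hsplit : ∀ x, (a x - b x) * (c x - d x) = g x + g (T x) := by
    intro x
    have hdc : d (T x) = c x := by rw [← hcd, hTT]
    simp only [g, hab, hcd, hdc]
    ring
  calc ∫ x, (a x - b x) * (c x - d x) ∂μ = ∫ x, g x + g (T x) ∂μ := by simp_rw [hsplit]
    _ = 2 * ∫ x, g x ∂μ := by rw [integral_add hg hgT, hT.integral_comp' g]; ring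
    _ = 2 * (∫ x, a x * c x ∂μ - ∫ x, a x * d x ∂μ) := by rw [integral_sub hac had]

lemma MeasureTheory.Integrable.comp_mul_comp_of_bounded {α β 𝕜 : Type*} [MeasurableSpace α]
    [MeasurableSpace β] [RCLike 𝕜] {μ : Measure α} [IsFiniteMeasure μ] {h f : β → 𝕜}
    (hh : Measurable h) (hf : Measurable f) (hhb : ∃ M, ∀ y, ‖h y‖ ≤ M)
    (hfb : ∃ M, ∀ y, ‖f y‖ ≤ M) {u v : α → β} (hu : Measurable u) (hv : Measurable v) :
    Integrable (fun x => h (u x) * f (v x)) μ := by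
  obtain ⟨M, hM⟩ := hhb
  obtain ⟨N, hN⟩ := hfb
  exact (Integrable.of_bound (hf.comp hv).aestronglyMeasurable N (ae_of_all _ fun _ => hN _)
    ).bdd_mul (hh.comp hu).aestronglyMeasurable (ae_of_all _ fun _ => hM _)

lemma MeasureTheory.measurePreserving_piCongrLeft_symm_of_comp_eq {κ 𝒳 : Type*} [Fintype κ]
    [MeasurableSpace 𝒳] (ρ : κ → Measure 𝒳) [∀ k, SigmaFinite (ρ k)] (e : κ ≃ κ)
    (he : ∀ k, ρ (e k) = ρ k) :
    MeasurePreserving (MeasurableEquiv.piCongrLeft (fun _ => 𝒳) e).symm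
      (Measure.pi ρ) (Measure.pi ρ) := by
  simpa only [he] using (measurePreserving_piCongrLeft ρ e).symm

instance MeasureTheory.isProbabilityMeasure_sumElim {α β 𝒳 : Type*} [MeasurableSpace 𝒳]
    {μ : α → Measure 𝒳} {ν : β → Measure 𝒳} [∀ i, IsProbabilityMeasure (μ i)]
    [∀ i, IsProbabilityMeasure (ν i)] (k : α ⊕ β) : IsProbabilityMeasure (Sum.elim μ ν k) := by
  cases k <;> dsimp <;> infer_instance

section CanonicalSpace

variable {ι 𝒳 𝕜 : Type*} [Fintype ι] [DecidableEq ι] [MeasurableSpace 𝒳] [RCLike 𝕜]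
  (ν : ι → Measure 𝒳) [∀ i, IsProbabilityMeasure (ν i)]

lemma integral_sub_mul_sub_resample {f h : (ι → 𝒳) → 𝕜} (hf : Measurable f)
    (hh : Measurable h) (hfb : ∃ M, ∀ y, ‖f y‖ ≤ M) (hhb : ∃ M, ∀ y, ‖h y‖ ≤ M)
    {A : Finset ι} {j : ι} (hj : j ∉ A) :
    ∫ x, (h (resample ∅ x) - h (resample {j} x)) *
        (f (resample A x) - f (resample (insert j A) x)) ∂Measure.pi (Sum.elim ν ν)
      = 2 * (∫ x, h (resample ∅ x) * f (resample A x) ∂Measure.pi (Sum.elim ν ν)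
          - ∫ x, h (resample ∅ x) * f (resample (insert j A) x) ∂Measure.pi (Sum.elim ν ν)) :=
  MeasurePreserving.integral_sub_mul_sub_of_involutive
    (T := (MeasurableEquiv.piCongrLeft (fun _ => 𝒳) (swapCopies j)).symm)
    (measurePreserving_piCongrLeft_symm_of_comp_eq _ _ (sumElim_swapCopies ν j))
    (fun x => funext fun k => congrArg x (Equiv.swap_apply_self _ _ k))
    (fun x => congrArg h <|
      (resample_comp_swapCopies (notMem_empty j) x).trans (by rw [insert_empty_eq]))
    (fun x => congrArg f (resample_comp_swapCopies hj x))
    (.comp_mul_comp_of_bounded hh hf hhb hfb (by fun_prop) (by fun_prop))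
    (.comp_mul_comp_of_bounded hh hf hhb hfb (by fun_prop) (by fun_prop))

lemma integral_comp_resample_empty (F : (ι → 𝒳) → 𝕜) :
    ∫ x, F (resample ∅ x) ∂Measure.pi (Sum.elim ν ν) = ∫ y, F y ∂Measure.pi ν := by
  simp only [resample_empty]
  exact ((measurePreserving_sumPiEquivProdPi (Sum.elim ν ν)).integral_comp'
    (fun p => F p.1)).trans (by simp [integral_fun_fst])

lemma integral_resample_empty_mul_resample_univ (h f : (ι → 𝒳) → 𝕜) :
    ∫ x, h (resample ∅ x) * f (resample univ x) ∂Measure.pi (Sum.elim ν ν)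
      = (∫ y, h y ∂Measure.pi ν) * ∫ y, f y ∂Measure.pi ν := by
  simp only [resample_empty, resample_univ]
  exact ((measurePreserving_sumPiEquivProdPi (Sum.elim ν ν)).integral_comp'
    (fun p => h p.1 * f p.2)).trans (integral_prod_mul h f)

theorem integral_mul_sub_mul_integral_eq_sum_resample {f h : (ι → 𝒳) → 𝕜}
    (hf : Measurable f) (hh : Measurable h) (hfb : ∃ M, ∀ y, ‖f y‖ ≤ M)
    (hhb : ∃ M, ∀ y, ‖h y‖ ≤ M) :
    ∫ x, h (resample ∅ x) * f (resample ∅ x) ∂Measure.pi (Sum.elim ν ν)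
        - (∫ x, h (resample ∅ x) ∂Measure.pi (Sum.elim ν ν))
          * ∫ x, f (resample ∅ x) ∂Measure.pi (Sum.elim ν ν)
      = 1 / 2 * ∑ A ∈ (univ : Finset ι).powerset.filter (· ≠ univ),
          shapleyWeight 𝕜 (Fintype.card ι) #A *
          ∑ j ∈ Aᶜ, ∫ x, (h (resample ∅ x) - h (resample {j} x)) *
            (f (resample A x) - f (resample (insert j A) x)) ∂Measure.pi (Sum.elim ν ν) := by
  set J : Finset ι → 𝕜 :=
    fun A => ∫ x, h (resample ∅ x) * f (resample A x) ∂Measure.pi (Sum.elim ν ν)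
  have hcov : ∫ x, h (resample ∅ x) * f (resample ∅ x) ∂Measure.pi (Sum.elim ν ν)
        - (∫ x, h (resample ∅ x) ∂Measure.pi (Sum.elim ν ν))
          * ∫ x, f (resample ∅ x) ∂Measure.pi (Sum.elim ν ν) = J ∅ - J univ := by
    rw [integral_comp_resample_empty ν h, integral_comp_resample_empty ν f,
      ← integral_resample_empty_mul_resample_univ]
  have hterm (A : Finset ι) :
      ∑ j ∈ Aᶜ, ∫ x, (h (resample ∅ x) - h (resample {j} x)) *
        (f (resample A x) - f (resample (insert j A) x)) ∂Measure.pi (Sum.elim ν ν)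
      = 2 * ∑ j ∈ Aᶜ, (J A - J (insert j A)) := by
    rw [mul_sum]
    exact sum_congr rfl fun j hj => integral_sub_mul_sub_resample ν hf hh hfb hhb (mem_compl.1 hj)
  simp_rw [hterm, mul_left_comm _ (2 : 𝕜), ← mul_sum, sum_shapleyWeight_mul_sum_compl_sub_insert,
    hcov]
  ring

end CanonicalSpace

/-- Chatterjee's covariance formula for functions of independent random variables
(Lemma 2.3 of Chatterjee 2008, Lemma 4.1 of the paper). -/
theorem chatterjee_covariance_formula
    {Ω 𝒳 : Type*} [MeasurableSpace Ω] [MeasurableSpace 𝒳]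
    (P : Measure Ω) [IsProbabilityMeasure P] (n : ℕ)
    (X X' : Ω → Fin n → 𝒳)
    (hXm : ∀ i, Measurable fun ω => X ω i)
    (hX'm : ∀ i, Measurable fun ω => X' ω i)
    (hindep : iIndepFun
      (fun p => Sum.elim (fun i ω => X ω i) (fun i ω => X' ω i) p) P)
    (hid : ∀ i, IdentDistrib (fun ω => X ω i) (fun ω => X' ω i) P P)
    (f h : (Fin n → 𝒳) → ℂ) (hf : Measurable f) (hh : Measurable h)
    (hfb : ∃ M, ∀ x, ‖f x‖ ≤ M) (hhb : ∃ M, ∀ x, ‖h x‖ ≤ M) :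
    (∫ ω, h (X ω) * f (X ω) ∂P) - (∫ ω, h (X ω) ∂P) * (∫ ω, f (X ω) ∂P)
      = (1 / 2) * ∑ A ∈ (Finset.univ : Finset (Fin n)).powerset.filter (· ≠ Finset.univ),
          (1 / ((n.choose A.card : ℂ) * ((n - A.card : ℕ) : ℂ))) *
          ∑ j ∈ Aᶜ,
            ∫ ω, (h (X ω) - h (fun i => if i = j then X' ω i else X ω i)) *
              (f (fun i => if i ∈ A then X' ω i else X ω i) -
               f (fun i => if i ∈ insert j A then X' ω i else X ω i)) ∂P := by
  set ν : Fin n → Measure 𝒳 := fun i => P.map (fun ω => X ω i)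
  have : ∀ i, IsProbabilityMeasure (ν i) := fun i =>
    Measure.isProbabilityMeasure_map (hXm i).aemeasurable
  have hcoord : ∀ k, Measurable (Sum.elim (fun i ω => X ω i) (fun i ω => X' ω i) k) := by
    rintro (i | i)
    exacts [hXm i, hX'm i]
  have hZ : Measurable fun ω k => Sum.elim (fun i ω => X ω i) (fun i ω => X' ω i) k ω :=
    measurable_pi_lambda _ hcoord
  have hlaw : P.map (fun ω k => Sum.elim (fun i ω => X ω i) (fun i ω => X' ω i) k ω)
      = Measure.pi (Sum.elim ν ν) := by
    rw [hindep.map_fun_eq_pi_map fun k => (hcoord k).aemeasurable]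
    congr 1
    funext k
    rcases k with i | i
    exacts [rfl, (hid i).map_eq.symm]
  have key := integral_mul_sub_mul_integral_eq_sum_resample ν hf hh hfb hhb
  rw [← hlaw] at key
  simp (disch := exact Measurable.aestronglyMeasurable (by fun_prop)) only
    [integral_map hZ.aemeasurable] at key
  simp only [resample_empty, resample_singleton, Sum.elim_inl, Sum.elim_inr,
    Fintype.card_fin] at key
  exact key
end

section
/- Let $X$ be a vector of independent random variables with independent copy $X'$, and let $h,f$ be bounded measurable functions. For any $A\subseteq[n]$ and $j\notin A$, one has $\mathbb E\{h(X)\,(f(X^A)-f(X^{A\cup\{j\}}))\} = \mathbb E\{h(X^{\{j\}})\,(f(X^{A\cup\{j\}})-f(X^A))\}$, and consequently $\mathbb E\{h(X)(f(X^A)-f(X^{A\cup\{j\}}))\} = \tfrac12\,\mathbb E\{\Delta_j h(X)\,\Delta_j f(X^A)\}$ where $\Delta_j h(X)=h(X)-h(X^{\{j\}})$ and $\Delta_j f(X^A)=f(X^A)-f(X^{A\cup\{j\}})$. -/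
open MeasureTheory ProbabilityTheory Finset

/-!
Pack `X` and `X'` into one vector `Z` indexed by `Fin n ⊕ Fin n`; its coordinates are independent,
so its law is the product of the coordinate laws. Exchanging the coordinates `inl j` and `inr j`
therefore preserves this law, because `X j` and `X' j` have the same distribution. The exchange
turns `X` into `X^{j}` and, as `j ∉ A`, swaps `X^A` with `X^{A ∪ {j}}`; this is the first identity.
Adding the two expressions of the same integral gives the second.
-/

namespace ProbabilityTheory

theorem iIndepFun.identDistrib_comp_perm {Ω ι κ : Type*} [MeasurableSpace Ω] [MeasurableSpace κ]
    [Fintype ι] {P : Measure Ω} {F : ι → Ω → κ} (hF : ∀ i, AEMeasurable (F i) P)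
    (hind : iIndepFun F P) (σ : Equiv.Perm ι) (hσ : ∀ i, IdentDistrib (F (σ i)) (F i) P P) :
    IdentDistrib (fun ω i => F (σ i) ω) (fun ω i => F i ω) P P where
  aemeasurable_fst := aemeasurable_pi_lambda _ fun i => hF (σ i)
  aemeasurable_snd := aemeasurable_pi_lambda _ hF
  map_eq := by
    rw [(hind.precomp σ.injective).map_fun_eq_pi_map (fun i => hF (σ i)),
      hind.map_fun_eq_pi_map hF]
    exact congrArg Measure.pi (funext fun i => (hσ i).map_eq)

end ProbabilityTheory

section Exchange

variable {ι α : Type*} [DecidableEq ι]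

/-- With `z = (X, X')`, this is the paper's `X^B`. -/
def replaceOn (B : Finset ι) (z : ι ⊕ ι → α) : ι → α :=
  fun i => if i ∈ B then z (.inr i) else z (.inl i)

lemma measurable_replaceOn [MeasurableSpace α] (B : Finset ι) :
    Measurable (replaceOn (α := α) B) :=
  measurable_pi_lambda _ fun i => by
    unfold replaceOn; split_ifs <;> exact measurable_pi_apply _

lemma comp_swap_comp_inl (z : ι ⊕ ι → α) (j : ι) :
    (z ∘ Equiv.swap (.inl j) (.inr j)) ∘ Sum.inl =
      fun i => if i = j then z (.inr i) else z (.inl i) := by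
  funext i
  by_cases hij : i = j <;> simp [Equiv.swap_apply_def, hij]

lemma replaceOn_insert_comp_swap {A : Finset ι} {j : ι} (hj : j ∉ A) (z : ι ⊕ ι → α) :
    replaceOn (insert j A) (z ∘ Equiv.swap (.inl j) (.inr j)) = replaceOn A z := by
  funext i
  by_cases hij : i = j
  · subst hij; simp [replaceOn, hj]
  · simp [replaceOn, Equiv.swap_apply_def, hij]

lemma replaceOn_comp_swap {A : Finset ι} {j : ι} (hj : j ∉ A) (z : ι ⊕ ι → α) :
    replaceOn A (z ∘ Equiv.swap (.inl j) (.inr j)) = replaceOn (insert j A) z := by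
  rw [← replaceOn_insert_comp_swap hj (z ∘ _), Function.comp_assoc,
    Function.Involutive.comp_self (Equiv.swap_apply_self _ _), Function.comp_id]

lemma identDistrib_sum_elim_comp_swap {Ω : Type*} [MeasurableSpace Ω] [MeasurableSpace α]
    [Fintype ι] {P : Measure Ω} {Y Y' : ι → Ω → α} (hY : ∀ i, AEMeasurable (Y i) P)
    (hY' : ∀ i, AEMeasurable (Y' i) P) (hind : iIndepFun (Sum.elim Y Y') P) (j : ι)
    (hj : IdentDistrib (Y j) (Y' j) P P) :
    IdentDistrib (fun ω p => Sum.elim Y Y' (Equiv.swap (.inl j) (.inr j) p) ω)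
      (fun ω p => Sum.elim Y Y' p ω) P P := by
  have hm : ∀ p, AEMeasurable (Sum.elim Y Y' p) P := by rintro (i | i); exacts [hY i, hY' i]
  refine hind.identDistrib_comp_perm hm _ fun p => ?_
  rcases p with i | i <;> by_cases hij : i = j
  · subst hij; simpa using hj.symm
  · simpa [Equiv.swap_apply_of_ne_of_ne, hij] using IdentDistrib.refl (hY i)
  · subst hij; simpa using hj
  · simpa [Equiv.swap_apply_of_ne_of_ne, hij] using IdentDistrib.refl (hY' i)

end Exchange

theorem integral_mul_sub_eq_half_of_exchange {α 𝕜 : Type*} [MeasurableSpace α] [RCLike 𝕜]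
    {μ : Measure α} {a b u v : α → 𝕜} (ha : Integrable (fun x => a x * (u x - v x)) μ)
    (hb : Integrable (fun x => b x * (u x - v x)) μ)
    (hab : ∫ x, a x * (u x - v x) ∂μ = ∫ x, b x * (v x - u x) ∂μ) :
    ∫ x, a x * (u x - v x) ∂μ = 1 / 2 * ∫ x, (a x - b x) * (u x - v x) ∂μ := by
  have hsub : ∫ x, (a x - b x) * (u x - v x) ∂μ =
      ∫ x, a x * (u x - v x) ∂μ - ∫ x, b x * (u x - v x) ∂μ := by
    rw [← integral_sub ha hb]; simp only [sub_mul]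
  have hneg : ∫ x, b x * (v x - u x) ∂μ = -∫ x, b x * (u x - v x) ∂μ := by
    rw [← integral_neg]; simp only [← mul_neg, neg_sub]
  rw [hsub]
  linear_combination (1 / 2 : 𝕜) * (hab.trans hneg)

/-- Exchange-symmetry identity: the key step in the proof of Chatterjee's covariance
formula. -/
theorem chatterjee_exchange_identity
    {Ω 𝒳 : Type*} [MeasurableSpace Ω] [MeasurableSpace 𝒳]
    (P : Measure Ω) [IsProbabilityMeasure P] (n : ℕ)
    (X X' : Ω → Fin n → 𝒳)
    (hXm : ∀ i, Measurable fun ω => X ω i)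
    (hX'm : ∀ i, Measurable fun ω => X' ω i)
    (hindep : iIndepFun
      (fun p => Sum.elim (fun i ω => X ω i) (fun i ω => X' ω i) p) P)
    (hid : ∀ i, IdentDistrib (fun ω => X ω i) (fun ω => X' ω i) P P)
    (h f : (Fin n → 𝒳) → ℂ) (hf : Measurable f) (hh : Measurable h)
    (hfb : ∃ M, ∀ x, ‖f x‖ ≤ M) (hhb : ∃ M, ∀ x, ‖h x‖ ≤ M)
    (A : Finset (Fin n)) (j : Fin n) (hj : j ∉ A) :
    ((∫ ω, h (X ω) * (f (fun i => if i ∈ A then X' ω i else X ω i) -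
          f (fun i => if i ∈ insert j A then X' ω i else X ω i)) ∂P)
        = ∫ ω, h (fun i => if i = j then X' ω i else X ω i) *
            (f (fun i => if i ∈ insert j A then X' ω i else X ω i) -
             f (fun i => if i ∈ A then X' ω i else X ω i)) ∂P) ∧
    ((∫ ω, h (X ω) * (f (fun i => if i ∈ A then X' ω i else X ω i) -
          f (fun i => if i ∈ insert j A then X' ω i else X ω i)) ∂P)
        = (1 / 2) * ∫ ω, (h (X ω) - h (fun i => if i = j then X' ω i else X ω i)) *
            (f (fun i => if i ∈ A then X' ω i else X ω i) -
             f (fun i => if i ∈ insert j A then X' ω i else X ω i)) ∂P) := by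
  let Z : Ω → Fin n ⊕ Fin n → 𝒳 := fun ω p =>
    Sum.elim (fun i ω => X ω i) (fun i ω => X' ω i) p ω
  have hZ : Measurable Z := measurable_pi_lambda _ (by rintro (i | i); exacts [hXm i, hX'm i])
  have hswap := identDistrib_sum_elim_comp_swap (fun i => (hXm i).aemeasurable)
    (fun i => (hX'm i).aemeasurable) hindep j (hid j)
  let G : (Fin n ⊕ Fin n → 𝒳) → ℂ := fun z =>
    h (z ∘ Sum.inl) * (f (replaceOn A z) - f (replaceOn (insert j A) z))
  have hG : Measurable G := (hh.comp (measurable_pi_lambda _ fun i => measurable_pi_apply _)).mul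
    ((hf.comp (measurable_replaceOn A)).sub (hf.comp (measurable_replaceOn _)))
  have hG_swap (z : Fin n ⊕ Fin n → 𝒳) : G (z ∘ Equiv.swap (.inl j) (.inr j)) =
      h (fun i => if i = j then z (.inr i) else z (.inl i)) *
        (f (replaceOn (insert j A) z) - f (replaceOn A z)) := by
    simp only [G, comp_swap_comp_inl, replaceOn_comp_swap hj, replaceOn_insert_comp_swap hj]
  have hexchange : ∫ ω, G (Z ω) ∂P = ∫ ω, G (Z ω ∘ Equiv.swap (.inl j) (.inr j)) ∂P :=
    (hswap.comp hG).integral_eq.symm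
  simp only [hG_swap] at hexchange
  obtain ⟨Mh, hMh⟩ := hhb
  obtain ⟨Mf, hMf⟩ := hfb
  have hdiff : Integrable
      (fun ω => f (replaceOn A (Z ω)) - f (replaceOn (insert j A) (Z ω))) P :=
    .of_bound (((hf.comp ((measurable_replaceOn A).comp hZ)).sub
      (hf.comp ((measurable_replaceOn _).comp hZ))).aestronglyMeasurable) (Mf + Mf)
      (ae_of_all _ fun ω => (norm_sub_le _ _).trans (add_le_add (hMf _) (hMf _)))
  have hint {U : Ω → Fin n → 𝒳} (hU : Measurable U) : Integrable (fun ω => h (U ω) *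
      (f (replaceOn A (Z ω)) - f (replaceOn (insert j A) (Z ω)))) P :=
    hdiff.bdd_mul (hh.comp hU).aestronglyMeasurable (ae_of_all _ fun ω => hMh _)
  exact ⟨hexchange, integral_mul_sub_eq_half_of_exchange (hint (measurable_pi_lambda _ hXm))
    (hint (measurable_pi_lambda _ fun i => by split_ifs; exacts [hX'm i, hXm i])) hexchange⟩
end
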